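/- Let Δ ≥ 2 and let G be a simple graph with no isolated vertices satisfying ν(G) = ⌈Δ/2⌉, Δ(G) = Δ, and |E(G)| = ⌊(2⌈Δ/2⌉+1)·Δ/2⌋. Then G is connected. -/

import Mathlib

open scoped Classical

/-- `M` is a matching of `G`, given as a finite set of edges. -/
def IsMatchingFinset {V : Type*} (G : SimpleGraph V) (M : Finset (Sym2 V)) : Prop :=
  (M : Set (Sym2 V)) ⊆ G.edgeSet ∧
    ∀ e ∈ M, ∀ f ∈ M, e ≠ f → ∀ v : V, ¬(v ∈ e ∧ v ∈ f)

/-- ν(G): the maximum size of a matching of `G`. -/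
noncomputable def matchingNumber {V : Type*} (G : SimpleGraph V) : ℕ :=
  sSup {n | ∃ M : Finset (Sym2 V), IsMatchingFinset G M ∧ M.card = n}

/-- A proper edge coloring of `G` using colors `< n`. -/
def IsProperEdgeColoring {V : Type*} (G : SimpleGraph V) (n : ℕ) (c : Sym2 V → ℕ) : Prop :=
  (∀ e ∈ G.edgeSet, c e < n) ∧
    ∀ e ∈ G.edgeSet, ∀ f ∈ G.edgeSet, e ≠ f → (∃ v : V, v ∈ e ∧ v ∈ f) → c e ≠ c f

/-- χ'(G): the edge chromatic index of `G`. -/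
noncomputable def chromaticIndex {V : Type*} (G : SimpleGraph V) : ℕ :=
  sInf {n | ∃ c : Sym2 V → ℕ, IsProperEdgeColoring G n c}

/-- `G` is friendly-edge-colorable: its edge set is partitioned into maximum matchings. -/
noncomputable def Friendly {V : Type*} [Fintype V] (G : SimpleGraph V) : Prop :=
  ∃ P : Finset (Finset (Sym2 V)),
    (∀ M ∈ P, IsMatchingFinset G M ∧ M.card = matchingNumber G) ∧
    (∀ e, e ∈ G.edgeFinset ↔ ∃ M ∈ P, e ∈ M) ∧
    ∀ M ∈ P, ∀ N ∈ P, M ≠ N → Disjoint M N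

/-- The graph `G` with vertex `x` deleted. -/
def delVert {V : Type*} (G : SimpleGraph V) (x : V) : SimpleGraph {v : V // v ≠ x} :=
  G.induce {v : V | v ≠ x}

/-- `G` has a perfect matching. -/
def HasPerfectMatchingFinset {V : Type*} (G : SimpleGraph V) : Prop :=
  ∃ M : Finset (Sym2 V), IsMatchingFinset G M ∧ ∀ v : V, ∃ e ∈ M, v ∈ e

/-- `G` is factor-critical. -/
def FactorCritical {V : Type*} (G : SimpleGraph V) : Prop :=
  G.Connected ∧ ∀ x : V, HasPerfectMatchingFinset (delVert G x)

/-!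
Suppose `G` is disconnected and split it as `G₁ ⊔ G₂` along a connected component. Neither part
is edgeless, so `1 ≤ ν(Gᵢ)` and `ν(G₁) + ν(G₂) ≤ ν(G) = ⌈Δ/2⌉`, whence `2ν(Gᵢ) < Δ`.

A graph `H` of maximum degree at most `Δ` with `2ν(H) < Δ` has at most `ν(H)·Δ` edges. If some
vertex is essential (deleting its edges lowers `ν`), delete its at most `Δ` edges and induct.
Otherwise Gallai's lemma says that a maximum matching misses at most one vertex of each
component, so every component has at most `2ν(H) + 1 ≤ Δ` vertices, and double counting gives
`2|E(H)| ≤ 2ν(H)·Δ`.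

Hence `|E(G)| ≤ (ν(G₁) + ν(G₂))·Δ ≤ ⌈Δ/2⌉·Δ < ⌊(2⌈Δ/2⌉ + 1)·Δ/2⌋`.
-/

open Finset SimpleGraph

section Matching

variable {V : Type*} {G H : SimpleGraph V} {M N : Finset (Sym2 V)} {e : Sym2 V}

noncomputable def coveredVerts (M : Finset (Sym2 V)) : Finset V := M.biUnion Sym2.toFinset

@[simp]
lemma mem_coveredVerts {v : V} : v ∈ coveredVerts M ↔ ∃ e ∈ M, v ∈ e := by
  simp [coveredVerts]

lemma isMatchingFinset_empty : IsMatchingFinset G ∅ := ⟨by simp, by simp⟩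

lemma IsMatchingFinset.mono (h : G ≤ H) (hM : IsMatchingFinset G M) : IsMatchingFinset H M :=
  ⟨hM.1.trans (edgeSet_mono h), hM.2⟩

lemma IsMatchingFinset.subset (hM : IsMatchingFinset G M) (hNM : N ⊆ M) :
    IsMatchingFinset G N :=
  ⟨(coe_subset.2 hNM).trans hM.1, fun e he f hf => hM.2 e (hNM he) f (hNM hf)⟩

lemma IsMatchingFinset.insert (hM : IsMatchingFinset G M) (he : e ∈ G.edgeSet)
    (hfree : ∀ v ∈ e, v ∉ coveredVerts M) : IsMatchingFinset G (insert e M) := by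
  refine ⟨by rw [coe_insert]; exact Set.insert_subset he hM.1, ?_⟩
  intro f hf g hg hfg v ⟨hvf, hvg⟩
  rcases mem_insert.1 hf with rfl | hfM <;> rcases mem_insert.1 hg with rfl | hgM
  · exact hfg rfl
  · exact hfree v hvf (mem_coveredVerts.2 ⟨g, hgM, hvg⟩)
  · exact hfree v hvg (mem_coveredVerts.2 ⟨f, hfM, hvf⟩)
  · exact hM.2 f hfM g hgM hfg v ⟨hvf, hvg⟩

lemma IsMatchingFinset.card_coveredVerts (hM : IsMatchingFinset G M) :
    #(coveredVerts M) = 2 * #M := by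
  rw [coveredVerts, card_biUnion, sum_const_nat (m := 2), mul_comm]
  · exact fun e he => Sym2.card_toFinset_of_not_isDiag e (G.not_isDiag_of_mem_edgeSet (hM.1 he))
  · intro e he f hf hef
    simp only [Function.onFun, Finset.disjoint_left, Sym2.mem_toFinset]
    exact fun v hve hvf => hM.2 e he f hf hef v ⟨hve, hvf⟩

end Matching

section MaximumMatching

variable {V : Type*} [Fintype V] {G H : SimpleGraph V} {M N : Finset (Sym2 V)}

def IsMaxMatchingFinset (G : SimpleGraph V) (M : Finset (Sym2 V)) : Prop :=
  IsMatchingFinset G M ∧ #M = matchingNumber G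

lemma bddAbove_matchingSizes (G : SimpleGraph V) :
    BddAbove {n | ∃ M : Finset (Sym2 V), IsMatchingFinset G M ∧ #M = n} := by
  refine ⟨Fintype.card (Sym2 V), ?_⟩
  rintro n ⟨M, -, rfl⟩
  exact M.card_le_univ

lemma IsMatchingFinset.card_le_matchingNumber (hM : IsMatchingFinset G M) :
    #M ≤ matchingNumber G :=
  le_csSup (bddAbove_matchingSizes G) ⟨M, hM, rfl⟩

lemma exists_isMaxMatchingFinset (G : SimpleGraph V) : ∃ M, IsMaxMatchingFinset G M :=
  Nat.sSup_mem (s := {n | ∃ M : Finset (Sym2 V), IsMatchingFinset G M ∧ #M = n})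
    ⟨0, ∅, isMatchingFinset_empty, rfl⟩ (bddAbove_matchingSizes G)

lemma matchingNumber_mono (h : G ≤ H) : matchingNumber G ≤ matchingNumber H := by
  obtain ⟨M, hM, hcard⟩ := exists_isMaxMatchingFinset G
  exact hcard ▸ (hM.mono h).card_le_matchingNumber

lemma one_le_matchingNumber {x y : V} (h : G.Adj x y) : 1 ≤ matchingNumber G := by
  simpa using (isMatchingFinset_empty.insert (e := s(x, y)) h (by simp)).card_le_matchingNumber

lemma IsMaxMatchingFinset.mem_coveredVerts_or (hM : IsMaxMatchingFinset G M) {x y : V}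
    (h : G.Adj x y) : x ∈ coveredVerts M ∨ y ∈ coveredVerts M := by
  by_contra! hxy
  have hnew : s(x, y) ∉ M := fun hxyM => hxy.1 (mem_coveredVerts.2 ⟨_, hxyM, Sym2.mem_mk_left x y⟩)
  have hfree : ∀ v ∈ s(x, y), v ∉ coveredVerts M := by
    intro v hv
    rcases Sym2.mem_iff.1 hv with rfl | rfl
    exacts [hxy.1, hxy.2]
  have := (hM.1.insert h hfree).card_le_matchingNumber
  rw [card_insert_of_notMem hnew, hM.2] at this
  omega

lemma exists_isMaxMatchingFinset_notMem_coveredVerts {t : V}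
    (ht : matchingNumber (G.deleteIncidenceSet t) = matchingNumber G) :
    ∃ N, IsMaxMatchingFinset G N ∧ t ∉ coveredVerts N := by
  obtain ⟨N, hN, hcard⟩ := exists_isMaxMatchingFinset (G.deleteIncidenceSet t)
  refine ⟨N, ⟨hN.mono (G.deleteIncidenceSet_le t), hcard.trans ht⟩, ?_⟩
  rintro htN
  obtain ⟨e, he, hte⟩ := mem_coveredVerts.1 htN
  have := hN.1 he
  rw [edgeSet_deleteIncidenceSet] at this
  exact this.2 ⟨this.1, hte⟩

lemma IsMaxMatchingFinset.exists_card_inter_lt (hM : IsMaxMatchingFinset G M)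
    (hN : IsMaxMatchingFinset G N) {t : V} (ht : t ∉ coveredVerts N)
    (h : 1 < #(coveredVerts N \ coveredVerts M)) :
    ∃ N', IsMaxMatchingFinset G N' ∧ t ∉ coveredVerts N' ∧ #(M ∩ N) < #(M ∩ N') := by
  have hcard : #(coveredVerts M \ coveredVerts N) = #(coveredVerts N \ coveredVerts M) :=
    card_sdiff_comm (by rw [hM.1.card_coveredVerts, hN.1.card_coveredVerts, hM.2, hN.2])
  obtain ⟨x, hx, hxt⟩ := exists_mem_ne (hcard ▸ h) t
  obtain ⟨hxM, hxN⟩ := mem_sdiff.1 hx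
  obtain ⟨e, heM, hxe⟩ := mem_coveredVerts.1 hxM
  obtain ⟨y, rfl⟩ := Sym2.mem_iff_exists.1 hxe
  have hxy : G.Adj x y := hM.1.1 heM
  have hyN : y ∈ coveredVerts N := (hN.mem_coveredVerts_or hxy).resolve_left hxN
  obtain ⟨f, hfN, hyf⟩ := mem_coveredVerts.1 hyN
  have heN : s(x, y) ∉ N := fun h => hxN (mem_coveredVerts.2 ⟨_, h, Sym2.mem_mk_left x y⟩)
  have hfM : f ∉ M := fun hfM =>
    hM.1.2 _ heM f hfM (by rintro rfl; exact heN hfN) y ⟨Sym2.mem_mk_right x y, hyf⟩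
  -- swap the `N`-edge at `y` for the `M`-edge `xy`
  have hfree : ∀ v ∈ s(x, y), v ∉ coveredVerts (N.erase f) := by
    intro v hv hvN
    obtain ⟨g, hg, hvg⟩ := mem_coveredVerts.1 hvN
    obtain ⟨hgf, hgN⟩ := mem_erase.1 hg
    rcases Sym2.mem_iff.1 hv with rfl | rfl
    · exact hxN (mem_coveredVerts.2 ⟨g, hgN, hvg⟩)
    · exact hN.1.2 g hgN f hfN hgf v ⟨hvg, hyf⟩
  refine ⟨insert s(x, y) (N.erase f),
    ⟨(hN.1.subset (erase_subset f N)).insert hxy hfree, ?_⟩, ?_, ?_⟩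
  · rw [card_insert_of_notMem (fun h => heN (mem_of_mem_erase h)), card_erase_add_one hfN, hN.2]
  · have hty : t ≠ y := by rintro rfl; exact ht hyN
    simp only [mem_coveredVerts, mem_insert, mem_erase, not_exists, not_and]
    rintro g (rfl | ⟨-, hgN⟩) htg
    · rcases Sym2.mem_iff.1 htg with rfl | rfl
      exacts [hxt rfl, hty rfl]
    · exact ht (mem_coveredVerts.2 ⟨g, hgN, htg⟩)
  · calc #(M ∩ N) < #(insert s(x, y) (M ∩ N)) :=
          card_lt_card (ssubset_insert fun h => heN (mem_inter.1 h).2)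
      _ ≤ #(M ∩ insert s(x, y) (N.erase f)) := by
          refine card_le_card fun g hg => ?_
          rcases mem_insert.1 hg with rfl | hg
          · exact mem_inter.2 ⟨heM, mem_insert_self _ _⟩
          · obtain ⟨hgM, hgN⟩ := mem_inter.1 hg
            have hgf : g ≠ f := by rintro rfl; exact hfM hgM
            exact mem_inter.2 ⟨hgM, mem_insert_of_mem (mem_erase.2 ⟨hgf, hgN⟩)⟩

theorem IsMaxMatchingFinset.not_reachable
    (hin : ∀ v, matchingNumber (G.deleteIncidenceSet v) = matchingNumber G)
    (hM : IsMaxMatchingFinset G M) {a b : V} (ha : a ∉ coveredVerts M) (hb : b ∉ coveredVerts M)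
    (hab : a ≠ b) : ¬G.Reachable a b := by
  /- Induction on `dist a b`. With `t` the neighbour of `a` on a shortest path, every maximum
  matching missing `t` must cover `a` and `b`; among those, one closest to `M` contradicts
  `exists_card_inter_lt`. -/
  intro hr
  obtain ⟨d, hd⟩ : ∃ d, G.dist a b = d := ⟨_, rfl⟩
  induction d using Nat.strong_induction_on generalizing M a b with
  | _ d ih =>
  obtain ⟨p, hp⟩ := hr.exists_walk_length_eq_dist
  cases p with
  | nil => exact hab rfl
  | @cons _ t _ hat q =>
  have htb : t ≠ b := by
    rintro rfl
    exact (hM.mem_coveredVerts_or hat).elim ha hb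
  have hq : q.length ≠ 0 := fun h => htb (Walk.eq_of_length_eq_zero h)
  rw [Walk.length_cons, hd] at hp
  have hat_lt : G.dist a t < d := by rw [dist_eq_one_iff_adj.2 hat]; omega
  have htb_lt : G.dist t b < d := (dist_le q).trans_lt (by omega)
  obtain ⟨N₀, hN₀, htN₀⟩ := exists_isMaxMatchingFinset_notMem_coveredVerts (hin t)
  obtain ⟨N, hN, hNmax⟩ := exists_max_image
    {N | IsMaxMatchingFinset G N ∧ t ∉ coveredVerts N} (fun N => #(M ∩ N))
    ⟨N₀, mem_filter.2 ⟨mem_univ _, hN₀, htN₀⟩⟩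
  simp only [mem_filter, mem_univ, true_and] at hN hNmax
  have haN : a ∈ coveredVerts N := by
    by_contra haN
    exact ih _ hat_lt hN.1 haN hN.2 hat.ne hat.reachable rfl
  have hbN : b ∈ coveredVerts N := by
    by_contra hbN
    exact ih _ htb_lt hN.1 hN.2 hbN htb ⟨q⟩ rfl
  have h2 : 1 < #(coveredVerts N \ coveredVerts M) := by
    have hsub : {a, b} ⊆ coveredVerts N \ coveredVerts M := by
      simp only [insert_subset_iff, singleton_subset_iff, mem_sdiff]
      exact ⟨⟨haN, ha⟩, hbN, hb⟩
    have := card_le_card hsub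
    rw [card_pair hab] at this
    omega
  obtain ⟨N', hN', htN', hlt⟩ := hM.exists_card_inter_lt hN.1 hN.2 h2
  exact (hNmax N' ⟨hN', htN'⟩).not_gt hlt

end MaximumMatching

section EdgeBound

variable {V : Type*} [Fintype V] {G : SimpleGraph V} [DecidableRel G.Adj] {D : ℕ}

theorem card_edgeFinset_le_of_forall_inessential
    (hin : ∀ v, matchingNumber (G.deleteIncidenceSet v) = matchingNumber G)
    (hD : 2 * matchingNumber G + 1 ≤ D) : #G.edgeFinset ≤ matchingNumber G * D := by
  obtain ⟨M, hM⟩ := exists_isMaxMatchingFinset G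
  set C := coveredVerts M
  have hC : #C = 2 * matchingNumber G := by rw [hM.1.card_coveredVerts, hM.2]
  -- each component contains at most one vertex missed by `M`
  have hcomp : ∀ v, #{w | G.Reachable v w} ≤ #{w ∈ C | G.Reachable v w} + 1 := by
    intro v
    have hexposed : #(({w | G.Reachable v w} : Finset V) \ C) ≤ 1 := by
      refine card_le_one.2 fun x hx y hy => ?_
      simp only [mem_sdiff, mem_filter, mem_univ, true_and] at hx hy
      by_contra hxy
      exact hM.not_reachable hin hx.2 hy.2 hxy (hx.1.symm.trans hy.1)
    have := card_sdiff_add_card_inter ({w | G.Reachable v w} : Finset V) C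
    rw [filter_inter, univ_inter] at this
    omega
  have hdeg : ∀ v, G.degree v ≤ #{w ∈ C | G.Reachable v w} := by
    intro v
    have hsub : G.neighborFinset v ⊆ ({w | G.Reachable v w} : Finset V).erase v := by
      intro w hw
      rw [mem_neighborFinset] at hw
      simpa [hw.ne'] using hw.reachable
    have := card_le_card hsub
    rw [card_neighborFinset_eq_degree, card_erase_of_mem (by simp)] at this
    have := hcomp v
    omega
  have hsize : ∀ w, #{v | G.Reachable v w} ≤ D := by
    intro w
    have := hcomp w
    have : #{u ∈ C | G.Reachable w u} ≤ #C := card_filter_le _ _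
    simp_rw [reachable_comm (v := w)]
    omega
  have := calc 2 * #G.edgeFinset = ∑ v, G.degree v := (sum_degrees_eq_twice_card_edges G).symm
    _ ≤ ∑ v, #{w ∈ C | G.Reachable v w} := sum_le_sum fun v _ => hdeg v
    _ = ∑ w ∈ C, #{v | G.Reachable v w} :=
        sum_card_bipartiteAbove_eq_sum_card_bipartiteBelow _
    _ ≤ ∑ w ∈ C, D := sum_le_sum fun w _ => hsize w
    _ = 2 * (matchingNumber G * D) := by rw [sum_const, smul_eq_mul, hC, mul_assoc]
  omega

theorem card_edgeFinset_le_matchingNumber_mul (hdeg : ∀ v, G.degree v ≤ D)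
    (hD : 2 * matchingNumber G < D) : #G.edgeFinset ≤ matchingNumber G * D := by
  obtain ⟨n, hn⟩ : ∃ n, matchingNumber G = n := ⟨_, rfl⟩
  induction n using Nat.strong_induction_on generalizing G with
  | _ n ih =>
  by_cases hess : ∃ v, matchingNumber (G.deleteIncidenceSet v) < n
  · obtain ⟨v, hv⟩ := hess
    have hE' := ih _ hv (fun w => (degree_le_of_le (G.deleteIncidenceSet_le v)).trans (hdeg w))
      (by omega) rfl
    have hdel := card_edgeFinset_deleteIncidenceSet G v
    have := Nat.mul_le_mul_right D (Nat.succ_le_of_lt hv)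
    rw [Nat.succ_mul] at this
    have := hdeg v
    rw [hn]
    omega
  · simp only [not_exists, not_lt] at hess
    have hin : ∀ v, matchingNumber (G.deleteIncidenceSet v) = matchingNumber G := fun v =>
      le_antisymm (matchingNumber_mono (G.deleteIncidenceSet_le v)) (hn ▸ hess v)
    exact card_edgeFinset_le_of_forall_inessential hin (by omega)

end EdgeBound

namespace SimpleGraph

variable {V : Type*} (G : SimpleGraph V) (s : Set V)

def restrict : SimpleGraph V where
  Adj x y := G.Adj x y ∧ x ∈ s ∧ y ∈ s
  symm := ⟨fun _ _ h => ⟨h.1.symm, h.2.2, h.2.1⟩⟩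
  loopless := ⟨fun _ h => G.irrefl h.1⟩

lemma restrict_le : G.restrict s ≤ G := fun _ _ h => h.1

variable {G s} in
lemma mem_of_mem_edgeSet_restrict {e : Sym2 V} (he : e ∈ (G.restrict s).edgeSet) {v : V}
    (hv : v ∈ e) : v ∈ s := by
  induction e using Sym2.ind with
  | _ x y =>
    obtain ⟨-, hx, hy⟩ := he
    rcases Sym2.mem_iff.1 hv with rfl | rfl
    exacts [hx, hy]

lemma matchingNumber_restrict_add_restrict_compl_le [Fintype V] :
    matchingNumber (G.restrict s) + matchingNumber (G.restrict sᶜ) ≤ matchingNumber G := by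
  obtain ⟨M₁, hM₁, hcard₁⟩ := exists_isMaxMatchingFinset (G.restrict s)
  obtain ⟨M₂, hM₂, hcard₂⟩ := exists_isMaxMatchingFinset (G.restrict sᶜ)
  have hsep : ∀ e₁ ∈ M₁, ∀ e₂ ∈ M₂, ∀ v ∈ e₁, v ∉ e₂ := fun e₁ h₁ e₂ h₂ v hv₁ hv₂ =>
    mem_of_mem_edgeSet_restrict (hM₂.1 h₂) hv₂ (mem_of_mem_edgeSet_restrict (hM₁.1 h₁) hv₁)
  have hunion : IsMatchingFinset G (M₁ ∪ M₂) := by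
    refine ⟨?_, ?_⟩
    · rw [coe_union]
      exact Set.union_subset ((hM₁.mono (G.restrict_le s)).1) ((hM₂.mono (G.restrict_le sᶜ)).1)
    · intro e he f hf hef v ⟨hve, hvf⟩
      rcases mem_union.1 he with he | he <;> rcases mem_union.1 hf with hf | hf
      · exact hM₁.2 e he f hf hef v ⟨hve, hvf⟩
      · exact hsep e he f hf v hve hvf
      · exact hsep f hf e he v hvf hve
      · exact hM₂.2 e he f hf hef v ⟨hve, hvf⟩
  have hdisj : Disjoint M₁ M₂ := Finset.disjoint_left.2 fun e h₁ h₂ =>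
    hsep e h₁ e h₂ _ (Sym2.out_fst_mem e) (Sym2.out_fst_mem e)
  rw [← hcard₁, ← hcard₂, ← card_union_of_disjoint hdisj]
  exact hunion.card_le_matchingNumber

variable {G s} [Fintype V] [DecidableRel G.Adj]

lemma card_edgeFinset_le_restrict_add_restrict_compl
    (hs : ∀ x y, G.Adj x y → x ∈ s → y ∈ s) :
    #G.edgeFinset ≤ #(G.restrict s).edgeFinset + #(G.restrict sᶜ).edgeFinset := by
  refine (card_le_card fun e he => ?_).trans (card_union_le _ _)
  induction e using Sym2.ind with
  | _ x y =>
    rw [mem_edgeFinset, mem_edgeSet] at he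
    rw [mem_union, mem_edgeFinset, mem_edgeFinset, mem_edgeSet, mem_edgeSet]
    by_cases hx : x ∈ s
    · exact Or.inl ⟨he, hx, hs x y he hx⟩
    · exact Or.inr ⟨he, hx, fun hy => hx (hs y x he.symm hy)⟩

theorem card_edgeFinset_le_matchingNumber_mul_of_not_preconnected {D : ℕ}
    (hiso : ∀ v, 0 < G.degree v) (hdeg : ∀ v, G.degree v ≤ D) (hD : 2 * matchingNumber G ≤ D + 1)
    (hG : ¬G.Preconnected) : #G.edgeFinset ≤ matchingNumber G * D := by
  obtain ⟨u, w, huw⟩ : ∃ u w, ¬G.Reachable u w := by simpa [Preconnected] using hG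
  set s := {v | G.Reachable u v}
  obtain ⟨x, hux⟩ := (G.degree_pos_iff_exists_adj u).1 (hiso u)
  obtain ⟨y, hwy⟩ := (G.degree_pos_iff_exists_adj w).1 (hiso w)
  have h₁ : 1 ≤ matchingNumber (G.restrict s) :=
    one_le_matchingNumber (x := u) (y := x) ⟨hux, Reachable.rfl, hux.reachable⟩
  have h₂ : 1 ≤ matchingNumber (G.restrict sᶜ) :=
    one_le_matchingNumber (x := w) (y := y) ⟨hwy, huw, fun hy => huw (hy.trans hwy.symm.reachable)⟩
  have hsum := G.matchingNumber_restrict_add_restrict_compl_le s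
  have hE₁ := card_edgeFinset_le_matchingNumber_mul
    (fun v => (degree_le_of_le (G.restrict_le s)).trans (hdeg v)) (by omega)
  have hE₂ := card_edgeFinset_le_matchingNumber_mul
    (fun v => (degree_le_of_le (G.restrict_le sᶜ)).trans (hdeg v)) (by omega)
  have hsplit := card_edgeFinset_le_restrict_add_restrict_compl (G := G) (s := s)
    fun x y h hx => hx.trans h.reachable
  have := Nat.mul_le_mul_right D hsum
  rw [add_mul] at this
  omega

end SimpleGraph

theorem stmt_3 {V : Type*} [Fintype V] (G : SimpleGraph V) (Δ : ℕ) (hΔ : 2 ≤ Δ)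
    (hiso : ∀ v : V, 0 < G.degree v)
    (hν : matchingNumber G = (Δ + 1) / 2)
    (hmax : G.maxDegree = Δ)
    (hE : G.edgeFinset.card = (2 * ((Δ + 1) / 2) + 1) * Δ / 2) :
    G.Connected := by
  have hmany : matchingNumber G * Δ < #G.edgeFinset := by
    have : (2 * matchingNumber G + 1) * Δ = 2 * (matchingNumber G * Δ) + Δ := by ring
    rw [← hν] at hE
    omega
  obtain ⟨e, -⟩ := card_pos.1 (hmany.trans_le' (Nat.zero_le _))
  have : Nonempty V := ⟨e.out.1⟩
  refine (connected_iff G).2 ⟨?_, ‹_›⟩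
  by_contra hG
  exact hmany.not_ge (card_edgeFinset_le_matchingNumber_mul_of_not_preconnected hiso
    (fun v => hmax ▸ G.degree_le_maxDegree v) (by omega) hG)
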